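/- Let (τ_n)_{n≥1} be a nondecreasing sequence of real numbers bounded above by T with limit τ, and let (Y^i)_{i∈I} be finitely many real-valued càdlàg functions on [0,T] (hence possessing left limits) and (g_{ij})_{i,j∈I} càdlàg functions with g_{ij} ≥ γ > 0 everywhere. Suppose there is a cyclic sequence of indices i₁, i₂, …, i_k with i_k = i₁ such that for every n and every l = 1,…,k−1 one has Y^{i_l}(τ_{n+l}) ≤ Y^{i_{l+1}}(τ_{n+l}) − g_{i_l i_{l+1}}(τ_{n+l}). Then passing to the left limit at τ yields g_{i₁i₂}(τ−) + g_{i₂i₃}(τ−) + ⋯ + g_{i_{k−1}i₁}(τ−) ≤ 0, a contradiction with g_{ij} ≥ γ > 0; hence no such infinite sequence of switching times can exist. -/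
import Mathlib


open Filter Topology


lemma chain_contra (γ : ℝ) (hγ : 0 < γ) {I : Type*} (k : ℕ) (hk : 2 ≤ k)
    (idx : ℕ → I) (hcyc : idx (k - 1) = idx 0) (Z : I → ℝ)
    (h : ∀ l, l < k - 1 → Z (idx l) + γ ≤ Z (idx (l + 1))) : False := by
  have key : ∀ l, l ≤ k - 1 → Z (idx 0) + l * γ ≤ Z (idx l) := by
    intro l
    induction l with
    | zero => simp
    | succ m ih =>
      intro hm
      have hm' : m < k - 1 := by omega
      have h1 := ih hm'.le
      have h2 := h m hm'
      push_cast
      linarith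
  have hfin := key (k - 1) le_rfl
  rw [hcyc] at hfin
  have h1 : (1 : ℝ) ≤ ((k - 1 : ℕ) : ℝ) := by
    have : 1 ≤ k - 1 := by omega
    exact_mod_cast this
  nlinarith

theorem no_free_loop' (T γ : ℝ) (hγ : 0 < γ) {I : Type*} [Fintype I]
    (Y : I → ℝ → ℝ) (g : I → I → ℝ → ℝ)
    (hYl : ∀ i, ∀ t ∈ Set.Icc (0:ℝ) T, ∃ L : ℝ, Tendsto (Y i) (𝓝[<] t) (𝓝 L))
    (hgl : ∀ i j, ∀ t ∈ Set.Icc (0:ℝ) T, ∃ L : ℝ, Tendsto (g i j) (𝓝[<] t) (𝓝 L))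
    (hgγ : ∀ i j t, γ ≤ g i j t)
    (τ : ℕ → ℝ) (hτmono : Monotone τ) (hτ0 : ∀ n, 0 ≤ τ n) (hτT : ∀ n, τ n ≤ T)
    (τlim : ℝ) (hτlim : Tendsto τ atTop (𝓝 τlim))
    (k : ℕ) (hk : 2 ≤ k) (idx : ℕ → I) (hcyc : idx (k - 1) = idx 0)
    (hineq : ∀ n : ℕ, ∀ l : ℕ, l < k - 1 →
      Y (idx l) (τ (n + l + 1)) ≤
        Y (idx (l + 1)) (τ (n + l + 1)) - g (idx l) (idx (l + 1)) (τ (n + l + 1))) :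
    False := by
  have hτle : ∀ n, τ n ≤ τlim := fun n => Monotone.ge_of_tendsto hτmono hτlim n
  by_cases hc : ∀ n, τ n < τlim
  · -- left limit case
    have hτmem : τlim ∈ Set.Icc (0:ℝ) T := by
      constructor
      · exact le_trans (hτ0 0) (hτle 0)
      · exact le_of_tendsto hτlim (Eventually.of_forall hτT)
    choose L hL using fun i => hYl i τlim hτmem
    choose M hM using fun i j => hgl i j τlim hτmem
    have hτlt : Tendsto τ atTop (𝓝[<] τlim) :=
      tendsto_nhdsWithin_of_tendsto_nhds_of_eventually_within τ hτlim
        (Eventually.of_forall hc)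
    have hshift : ∀ m : ℕ, Tendsto (fun n => τ (n + m)) atTop (𝓝[<] τlim) :=
      fun m => hτlt.comp (tendsto_add_atTop_nat m)
    have hMγ : ∀ i j, γ ≤ M i j := by
      intro i j
      exact ge_of_tendsto' ((hM i j).comp (hshift 1)) (fun n => hgγ i j _)
    refine chain_contra γ hγ k hk idx hcyc L (fun l hl => ?_)
    have hYlim1 : Tendsto (fun n => Y (idx l) (τ (n + l + 1))) atTop (𝓝 (L (idx l))) :=
      (hL (idx l)).comp (hshift (l + 1))
    have hYlim2 : Tendsto (fun n => Y (idx (l + 1)) (τ (n + l + 1))) atTop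
        (𝓝 (L (idx (l + 1)))) := (hL (idx (l + 1))).comp (hshift (l + 1))
    have hglim : Tendsto (fun n => g (idx l) (idx (l + 1)) (τ (n + l + 1))) atTop
        (𝓝 (M (idx l) (idx (l + 1)))) := (hM (idx l) (idx (l + 1))).comp (hshift (l + 1))
    have h1 : L (idx l) + M (idx l) (idx (l + 1)) ≤ L (idx (l + 1)) := by
      refine le_of_tendsto_of_tendsto' (hYlim1.add hglim) hYlim2 (fun n => ?_)
      have := hineq n l hl
      linarith
    have := hMγ (idx l) (idx (l + 1))
    linarith
  · -- eventually constant case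
    push_neg at hc
    obtain ⟨N, hN⟩ := hc
    have hNeq : τ N = τlim := le_antisymm (hτle N) hN
    have hconst : ∀ m, N ≤ m → τ m = τlim :=
      fun m hm => le_antisymm (hτle m) (hNeq ▸ hτmono hm)
    refine chain_contra γ hγ k hk idx hcyc (fun i => Y i τlim) (fun l hl => ?_)
    have h := hineq N l hl
    rw [hconst (N + l + 1) (by omega)] at h
    have := hgγ (idx l) (idx (l + 1)) τlim
    linarith

/-- The "no free loop" argument: càdlàg value processes `Y^i` and càdlàg switching costs
`g_{ij} ≥ γ > 0` cannot satisfy a cyclic chain of switching inequalities along a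
nondecreasing sequence of switching times `(τ_n)` bounded by `T`; such a configuration
is contradictory. -/
theorem no_free_loop (T γ : ℝ) (hγ : 0 < γ) {I : Type*} [Fintype I]
    (Y : I → ℝ → ℝ) (g : I → I → ℝ → ℝ)
    -- each Y i is càdlàg on [0,T]: right continuous with left limits
    (hYr : ∀ i, ∀ t ∈ Set.Icc (0:ℝ) T, Tendsto (Y i) (𝓝[>] t) (𝓝 (Y i t)))
    (hYl : ∀ i, ∀ t ∈ Set.Icc (0:ℝ) T, ∃ L : ℝ, Tendsto (Y i) (𝓝[<] t) (𝓝 L))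
    -- each g i j is càdlàg on [0,T]
    (hgr : ∀ i j, ∀ t ∈ Set.Icc (0:ℝ) T, Tendsto (g i j) (𝓝[>] t) (𝓝 (g i j t)))
    (hgl : ∀ i j, ∀ t ∈ Set.Icc (0:ℝ) T, ∃ L : ℝ, Tendsto (g i j) (𝓝[<] t) (𝓝 L))
    -- costs are bounded below by γ > 0
    (hgγ : ∀ i j t, γ ≤ g i j t)
    -- nondecreasing sequence of times in [0,T] with limit τ∞
    (τ : ℕ → ℝ) (hτmono : Monotone τ) (hτ0 : ∀ n, 0 ≤ τ n) (hτT : ∀ n, τ n ≤ T)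
    (τlim : ℝ) (hτlim : Tendsto τ atTop (𝓝 τlim))
    -- a cyclic sequence of indices i₁,…,i_k with i_k = i₁
    (k : ℕ) (hk : 2 ≤ k) (idx : ℕ → I) (hcyc : idx (k - 1) = idx 0)
    -- the cyclic switching inequalities hold at all times τ_{n+l}
    (hineq : ∀ n : ℕ, ∀ l : ℕ, l < k - 1 →
      Y (idx l) (τ (n + l + 1)) ≤
        Y (idx (l + 1)) (τ (n + l + 1)) - g (idx l) (idx (l + 1)) (τ (n + l + 1))) :
    False := by
  exact no_free_loop' T γ hγ Y g hYl hgl hgγ τ hτmono hτ0 hτT τlim hτlim k hk idx hcyc hineq
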